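/- In the proof situation of the rank bound theorem: if b₁, b₂, … is a sequence in C_S(a) with b₁ = 1 and each b_{k+1} chosen of minimal χ-value outside the left K[a]-span of {b₁,…,b_k}, then for all φ₁,…,φ_k ∈ K[a] one has χ(Σᵢ φᵢbᵢ) = maxᵢ (χ(φᵢ) + χ(bᵢ)). -/

import Mathlib

/-- A pseudo-degree function on a (not necessarily associative) algebra `S`. -/
def IsPseudoDegree {S : Type*} [NonAssocRing S] (χ : S → WithBot ℤ) : Prop :=
  (∀ a : S, χ a = ⊥ ↔ a = 0) ∧
  (∀ a b : S, χ (a * b) = χ a + χ b) ∧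
  (∀ a b : S, χ (a + b) ≤ max (χ a) (χ b))

/-- The nucleus of `S`. -/
def nucleus (S : Type*) [NonAssocRing S] : Set S :=
  {a | (∀ b c : S, a * (b * c) = (a * b) * c) ∧
       (∀ b c : S, (b * a) * c = b * (a * c)) ∧
       (∀ b c : S, (b * c) * a = b * (c * a))}

/-- The centralizer of `a` in `S`. -/
def centralizer {S : Type*} [NonAssocRing S] (a : S) : Set S :=
  {b | a * b = b * a}

/-- Condition `D(ℓ)` for a subset `B` of `S` with respect to a pseudo-degree function
`χ`: every nonzero element of `B` has `χ`-value `≥ 0`, and whenever `ℓ + 1` elements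
of `B` are all mapped to the same integer by `χ`, some nontrivial `K`-linear
combination of them has strictly smaller `χ`-value. -/
def CondD (K : Type*) {S : Type*} [Field K] [NonAssocRing S] [Module K S]
    (χ : S → WithBot ℤ) (B : Set S) (ℓ : ℕ) : Prop :=
  (∀ b ∈ B, b ≠ 0 → 0 ≤ χ b) ∧
  ∀ (f : Fin (ℓ + 1) → S) (n : ℤ), (∀ i, f i ∈ B) →
    (∀ i, χ (f i) = (n : WithBot ℤ)) →
    ∃ c : Fin (ℓ + 1) → K, (∃ i, c i ≠ 0) ∧
      χ (∑ i, c i • f i) < (n : WithBot ℤ)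

/-- Powers of an element of a non-associative unital ring. -/
def apow {S : Type*} [NonAssocRing S] (a : S) : ℕ → S
  | 0 => 1
  | n + 1 => a * apow a n

/-- Evaluation of a polynomial `p ∈ K[x]` at an element `a` of a non-associative
`K`-algebra; for `a` in the nucleus this is the usual evaluation in `K[a]`. -/
noncomputable def evalAt {K S : Type*} [Field K] [NonAssocRing S] [Module K S]
    (a : S) (p : Polynomial K) : S :=
  p.sum fun i c => c • apow a i

/-- `c` lies in the left `K[a]`-linear span of `b 0, …, b (i-1)`. -/
def InSpanUpTo {K S : Type*} [Field K] [NonAssocRing S] [Module K S]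
    (a : S) (b : ℕ → S) (i : ℕ) (c : S) : Prop :=
  ∃ φ : ℕ → Polynomial K, c = ∑ j ∈ Finset.range i, evalAt (a := a) (φ j) * b j

/-!
Write `F j = χ(φ_j(a)) + χ(b_j)` and `M = max_j F j`; `χ(Σ φ_j(a) b_j) ≤ M` is the ultrametric
inequality. Since `χ(a) > 0`, `χ(p(a)) = deg p · χ(a)`, so if the inequality were strict, the
leading parts `c_j a^{d_j} b_j` (`c_j`, `d_j` the leading coefficient and degree of `φ_j`) of the
indices with `F j = M` would sum to something of degree `< M`. Let `i` be the largest such index.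
The minimality of the `b`'s makes `j ↦ χ(b_j)` monotone, so `d_i ≤ d_j`, and splitting off
`a^{d_i}` leaves an element `w ∈ C_S(a)` with `χ(w) < χ(b_i)` and `w ∈ c_i b_i + K[a]b_0 + ⋯ +
K[a]b_{i-1}`, `c_i ≠ 0`. Such a `w` is not in the span of `b_0, …, b_{i-1}` (as `b_i` is not),
contradicting the minimality of `χ(b_i)`.
-/

namespace IsPseudoDegree

variable {S : Type*} [NonAssocRing S] {χ : S → WithBot ℤ}

theorem map_zero (hχ : IsPseudoDegree χ) : χ 0 = ⊥ := (hχ.1 0).2 rfl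

theorem ne_bot (hχ : IsPseudoDegree χ) {x : S} (hx : x ≠ 0) : χ x ≠ ⊥ :=
  fun h => hx ((hχ.1 x).1 h)

theorem map_mul (hχ : IsPseudoDegree χ) (x y : S) : χ (x * y) = χ x + χ y := hχ.2.1 x y

theorem map_add_le (hχ : IsPseudoDegree χ) (x y : S) : χ (x + y) ≤ max (χ x) (χ y) :=
  hχ.2.2 x y

theorem map_one (hχ : IsPseudoDegree χ) (h1 : (1 : S) ≠ 0) : χ 1 = 0 := by
  have h := hχ.map_mul 1 1
  rw [mul_one] at h
  lift χ 1 to ℤ using hχ.ne_bot h1 with n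
  norm_cast at h ⊢
  omega

theorem map_neg (hχ : IsPseudoDegree χ) (x : S) : χ (-x) = χ x := by
  by_cases h1 : (1 : S) = 0
  · have : Subsingleton S := subsingleton_of_zero_eq_one h1.symm
    rw [Subsingleton.elim (-x) x]
  have hneg : χ (-1) = 0 := by
    have h := hχ.map_mul (-1) (-1)
    rw [neg_mul_neg, mul_one, hχ.map_one h1] at h
    lift χ (-1) to ℤ using hχ.ne_bot (neg_ne_zero.2 h1) with n
    norm_cast at h ⊢
    omega
  rw [← neg_one_mul, hχ.map_mul, hneg, zero_add]

theorem map_sub_le (hχ : IsPseudoDegree χ) (x y : S) : χ (x - y) ≤ max (χ x) (χ y) := by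
  rw [sub_eq_add_neg, ← hχ.map_neg y]
  exact hχ.map_add_le x (-y)

theorem map_add_eq_left (hχ : IsPseudoDegree χ) {x y : S} (h : χ y < χ x) :
    χ (x + y) = χ x := by
  refine le_antisymm ((hχ.map_add_le x y).trans (max_le le_rfl h.le)) ?_
  have hx := hχ.map_sub_le (x + y) y
  rw [add_sub_cancel_right] at hx
  exact (le_max_iff.1 hx).resolve_right h.not_ge

theorem map_sum_le (hχ : IsPseudoDegree χ) {ι : Type*} (s : Finset ι) (f : ι → S) :
    χ (∑ i ∈ s, f i) ≤ s.sup fun i => χ (f i) := by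
  classical
  induction s using Finset.induction_on with
  | empty => simp [hχ.map_zero]
  | insert i s hi ih =>
    rw [Finset.sum_insert hi, Finset.sup_insert]
    exact (hχ.map_add_le _ _).trans (max_le_max le_rfl ih)

theorem map_sum_eq_of_lt (hχ : IsPseudoDegree χ) {ι : Type*} [DecidableEq ι] {s : Finset ι}
    {f : ι → S} {j : ι} (hj : j ∈ s) (hlt : ∀ i ∈ s, i ≠ j → χ (f i) < χ (f j)) :
    χ (∑ i ∈ s, f i) = χ (f j) := by
  rw [← Finset.add_sum_erase s f hj]
  rcases (s.erase j).eq_empty_or_nonempty with he | ⟨i, hi⟩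
  · rw [he, Finset.sum_empty, add_zero]
  have hbot : ⊥ < χ (f j) :=
    bot_le.trans_lt (hlt i (Finset.mem_of_mem_erase hi) (Finset.ne_of_mem_erase hi))
  refine hχ.map_add_eq_left ((hχ.map_sum_le _ _).trans_lt ((Finset.sup_lt_iff hbot).2 ?_))
  exact fun i hi => hlt i (Finset.mem_of_mem_erase hi) (Finset.ne_of_mem_erase hi)

theorem map_smul {K : Type*} [Field K] [Module K S] [IsScalarTower K S S]
    (hχ : IsPseudoDegree χ) (hK : ∀ c : K, c ≠ 0 → 0 ≤ χ (c • (1 : S))) {c : K} (hc : c ≠ 0)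
    (x : S) : χ (c • x) = χ x := by
  by_cases h1 : (1 : S) = 0
  · have : Subsingleton S := subsingleton_of_zero_eq_one h1.symm
    rw [Subsingleton.elim (c • x) x]
  have hunit : χ (c • (1 : S)) + χ (c⁻¹ • (1 : S)) = 0 := by
    rw [← hχ.map_mul, smul_mul_assoc, one_mul, smul_smul, mul_inv_cancel₀ hc, one_smul,
      hχ.map_one h1]
  have hc1 : χ (c • (1 : S)) = 0 :=
    ((add_eq_zero_iff_of_nonneg (hK c hc) (hK c⁻¹ (inv_ne_zero hc))).1 hunit).1
  rw [← one_mul x, ← smul_mul_assoc, hχ.map_mul, hc1, zero_add, one_mul]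

end IsPseudoDegree

section Nucleus

variable {S : Type*} [NonAssocRing S] {a : S}

theorem apow_mul_apow_mul (ha : a ∈ nucleus S) (p q : ℕ) (x : S) :
    apow a p * (apow a q * x) = apow a (p + q) * x := by
  induction p with
  | zero => simp only [apow, one_mul, zero_add]
  | succ p ih =>
    rw [Nat.succ_add]
    change a * apow a p * (apow a q * x) = a * apow a (p + q) * x
    rw [← ha.1, ih, ha.1]

theorem apow_mul_mem_centralizer (ha : a ∈ nucleus S) {x : S} (hx : x ∈ centralizer a)
    (n : ℕ) : apow a n * x ∈ centralizer a := by
  have ha1 : apow a 1 = a := mul_one a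
  change a * (apow a n * x) = apow a n * x * a
  calc a * (apow a n * x) = apow a (1 + n) * x := by
        rw [← apow_mul_apow_mul ha, ha1]
    _ = apow a n * (a * x) := by rw [add_comm, ← apow_mul_apow_mul ha, ha1]
    _ = apow a n * x * a := by rw [hx, ha.2.2]

theorem IsPseudoDegree.map_apow {χ : S → WithBot ℤ} (hχ : IsPseudoDegree χ) {m : ℤ}
    (hm : χ a = m) (n : ℕ) : χ (apow a n) = ((n * m : ℤ) : WithBot ℤ) := by
  induction n with
  | zero =>
    have h1 : (1 : S) ≠ 0 := fun h1 => by
      rw [← mul_one a, h1, mul_zero, hχ.map_zero] at hm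
      exact WithBot.bot_ne_coe hm
    rw [Nat.cast_zero, zero_mul]
    exact hχ.map_one h1
  | succ n ih =>
    change χ (a * apow a n) = _
    rw [hχ.map_mul, hm, ih, ← WithBot.coe_add]
    congr 1
    push_cast
    ring

end Nucleus

section

variable {K S : Type*} [Field K] [NonAssocRing S] [Module K S]

def centralizerSubmodule [SMulCommClass K S S] [IsScalarTower K S S] (a : S) :
    Submodule K S where
  carrier := centralizer a
  zero_mem' := by simp only [centralizer, Set.mem_ofPred_eq, mul_zero, zero_mul]
  add_mem' {x y} hx hy := by
    simp only [centralizer, Set.mem_ofPred_eq] at *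
    rw [mul_add, add_mul, hx, hy]
  smul_mem' c x hx := by
    simp only [centralizer, Set.mem_ofPred_eq] at *
    rw [mul_smul_comm, smul_mul_assoc, hx]

section EvalAt

variable (K) in
noncomputable def evalAtLinearMap (a : S) : Polynomial K →ₗ[K] S :=
  Polynomial.lsum fun n => LinearMap.toSpanSingleton K S (apow a n)

variable {a : S}

theorem evalAtLinearMap_apply (p : Polynomial K) : evalAtLinearMap K a p = evalAt a p := by
  simp only [evalAtLinearMap, Polynomial.lsum_apply, LinearMap.toSpanSingleton_apply, evalAt]

theorem evalAt_zero : evalAt a (0 : Polynomial K) = 0 := by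
  rw [← evalAtLinearMap_apply, map_zero]

theorem evalAt_sub (p q : Polynomial K) : evalAt a (p - q) = evalAt a p - evalAt a q := by
  simp only [← evalAtLinearMap_apply, map_sub]

theorem evalAt_add (p q : Polynomial K) : evalAt a (p + q) = evalAt a p + evalAt a q := by
  simp only [← evalAtLinearMap_apply, map_add]

theorem evalAt_smul (c : K) (p : Polynomial K) : evalAt a (c • p) = c • evalAt a p := by
  simp only [← evalAtLinearMap_apply, map_smul]

theorem evalAt_monomial (n : ℕ) (c : K) : evalAt a (Polynomial.monomial n c) = c • apow a n :=
  Polynomial.sum_monomial_index c _ (zero_smul K _)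

theorem evalAt_eq_sum_support (p : Polynomial K) :
    evalAt a p = ∑ i ∈ p.support, p.coeff i • apow a i :=
  Polynomial.sum_def p _

end EvalAt

section Degree

variable [IsScalarTower K S S] {χ : S → WithBot ℤ} {a : S} {m : ℤ}

theorem IsPseudoDegree.map_evalAt (hχ : IsPseudoDegree χ)
    (hK : ∀ c : K, c ≠ 0 → 0 ≤ χ (c • (1 : S))) (hm : χ a = m) (hm0 : 0 < m)
    {p : Polynomial K} (hp : p ≠ 0) : χ (evalAt a p) = ((p.natDegree * m : ℤ) : WithBot ℤ) := by
  classical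
  have hterm : ∀ i ∈ p.support, χ (p.coeff i • apow a i) = ((i * m : ℤ) : WithBot ℤ) :=
    fun i hi => by rw [hχ.map_smul hK (Polynomial.mem_support_iff.1 hi), hχ.map_apow hm]
  have htop := Polynomial.natDegree_mem_support_of_nonzero hp
  rw [evalAt_eq_sum_support, hχ.map_sum_eq_of_lt htop, hterm _ htop]
  intro i hi hne
  have hlt : i < p.natDegree := lt_of_le_of_ne (Polynomial.le_natDegree_of_mem_supp i hi) hne
  rw [hterm i hi, hterm _ htop, WithBot.coe_lt_coe]
  exact mul_lt_mul_of_pos_right (by exact_mod_cast hlt) hm0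

theorem IsPseudoDegree.map_evalAt_eraseLead_lt (hχ : IsPseudoDegree χ)
    (hK : ∀ c : K, c ≠ 0 → 0 ≤ χ (c • (1 : S))) (hm : χ a = m) (hm0 : 0 < m)
    {p : Polynomial K} (hp : p ≠ 0) : χ (evalAt a p.eraseLead) < χ (evalAt a p) := by
  rw [hχ.map_evalAt hK hm hm0 hp]
  by_cases he : p.eraseLead = 0
  · rw [he, evalAt_zero, hχ.map_zero]
    exact WithBot.bot_lt_coe _
  have hlt : p.eraseLead.natDegree < p.natDegree :=
    Polynomial.natDegree_lt_natDegree he (Polynomial.degree_eraseLead_lt hp)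
  rw [hχ.map_evalAt hK hm hm0 he, WithBot.coe_lt_coe]
  exact mul_lt_mul_of_pos_right (by exact_mod_cast hlt) hm0

end Degree

theorem evalAt_sub_leadingTerm {a : S} (p : Polynomial K) :
    evalAt a p - p.leadingCoeff • apow a p.natDegree = evalAt a p.eraseLead := by
  rw [← evalAt_monomial, ← evalAt_sub, Polynomial.self_sub_monomial_natDegree_leadingCoeff]

theorem IsPseudoDegree.map_sum_sub_leadingTerms_lt [IsScalarTower K S S] {χ : S → WithBot ℤ}
    (hχ : IsPseudoDegree χ) (hK : ∀ c : K, c ≠ 0 → 0 ≤ χ (c • (1 : S))) {a : S} {m : ℤ}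
    (hm : χ a = m) (hm0 : 0 < m) (b : ℕ → S) (φ : ℕ → Polynomial K) (s : Finset ℕ)
    {M : WithBot ℤ} (hM : ∀ j ∈ s, χ (evalAt a (φ j)) + χ (b j) ≤ M) (hMbot : M ≠ ⊥) :
    χ (∑ j ∈ s, evalAt a (φ j) * b j -
      ∑ j ∈ s with χ (evalAt a (φ j)) + χ (b j) = M,
        (φ j).leadingCoeff • (apow a (φ j).natDegree * b j)) < M := by
  rw [Finset.sum_filter, ← Finset.sum_sub_distrib]
  refine (hχ.map_sum_le _ _).trans_lt
    ((Finset.sup_lt_iff (bot_lt_iff_ne_bot.2 hMbot)).2 fun j hj => ?_)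
  split_ifs with hjM
  · have hφ : φ j ≠ 0 := by
      rintro h
      rw [h, evalAt_zero, hχ.map_zero, WithBot.bot_add] at hjM
      exact hMbot hjM.symm
    have hb : χ (b j) ≠ ⊥ := by
      rintro h
      rw [h, WithBot.add_bot] at hjM
      exact hMbot hjM.symm
    rw [← smul_mul_assoc, ← sub_mul, evalAt_sub_leadingTerm, hχ.map_mul, ← hjM]
    exact WithBot.add_lt_add_right hb (hχ.map_evalAt_eraseLead_lt hK hm hm0 hφ)
  · rw [sub_zero, hχ.map_mul]
    exact lt_of_le_of_ne (hM j hj) hjM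

section Span

variable [IsScalarTower K S S] {a : S} {b : ℕ → S}

variable (K) in
def spanUpTo (a : S) (b : ℕ → S) (i : ℕ) : Submodule K S where
  carrier := {c | InSpanUpTo (K := K) a b i c}
  zero_mem' := ⟨fun _ => 0, by simp only [evalAt_zero, zero_mul, Finset.sum_const_zero]⟩
  add_mem' := by
    rintro _ _ ⟨φ, rfl⟩ ⟨ψ, rfl⟩
    exact ⟨φ + ψ, by simp only [Pi.add_apply, evalAt_add, add_mul, Finset.sum_add_distrib]⟩
  smul_mem' := by
    rintro c _ ⟨φ, rfl⟩
    exact ⟨c • φ, by simp only [Pi.smul_apply, evalAt_smul, smul_mul_assoc, Finset.smul_sum]⟩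

theorem evalAt_mul_mem_spanUpTo {i j : ℕ} (hj : j < i) (p : Polynomial K) :
    evalAt a p * b j ∈ spanUpTo K a b i := by
  refine ⟨Pi.single j p, ?_⟩
  rw [Finset.sum_eq_single_of_mem j (Finset.mem_range.2 hj)
    (fun l _ hl => by rw [Pi.single_eq_of_ne hl, evalAt_zero, zero_mul]), Pi.single_eq_same]

theorem apow_mul_mem_spanUpTo {i j : ℕ} (hj : j < i) (n : ℕ) :
    apow a n * b j ∈ spanUpTo K a b i := by
  simpa only [evalAt_monomial, one_smul] using
    evalAt_mul_mem_spanUpTo (a := a) (b := b) hj (Polynomial.monomial n (1 : K))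

theorem spanUpTo_mono {i i' : ℕ} (h : i ≤ i') : spanUpTo K a b i ≤ spanUpTo K a b i' := by
  rintro _ ⟨φ, rfl⟩
  exact Submodule.sum_mem _ fun j hj =>
    evalAt_mul_mem_spanUpTo (Finset.mem_range.1 hj |>.trans_le h) _

theorem inSpanUpTo_zero_iff {c : S} : InSpanUpTo (K := K) a b 0 c ↔ c = 0 := by
  refine ⟨?_, fun hc => hc ▸ (spanUpTo K a b 0).zero_mem⟩
  rintro ⟨φ, rfl⟩
  exact Finset.sum_range_zero _

end Span

variable (K) in
structure IsMinimalSequence (χ : S → WithBot ℤ) (a : S) (b : ℕ → S) : Prop where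
  zero : b 0 = 1
  mem_centralizer : ∀ i, b i ∈ centralizer a
  not_inSpanUpTo : ∀ i, 0 < i → ¬ InSpanUpTo (K := K) a b i (b i)
  degree_le : ∀ i, 0 < i → ∀ c ∈ centralizer a, ¬ InSpanUpTo (K := K) a b i c → χ (b i) ≤ χ c

namespace IsMinimalSequence

variable [IsScalarTower K S S] {χ : S → WithBot ℤ} {a : S} {b : ℕ → S}

theorem not_inSpanUpTo_self (hb : IsMinimalSequence K χ a b) (h1 : (1 : S) ≠ 0) (i : ℕ) :
    ¬ InSpanUpTo (K := K) a b i (b i) := by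
  rcases Nat.eq_zero_or_pos i with rfl | hi
  · rwa [inSpanUpTo_zero_iff, hb.zero]
  · exact hb.not_inSpanUpTo i hi

theorem degree_le_of_not_inSpanUpTo (hb : IsMinimalSequence K χ a b) (hχ : IsPseudoDegree χ)
    (hnonneg : ∀ c ∈ centralizer a, c ≠ 0 → 0 ≤ χ c) (i : ℕ) {c : S} (hc : c ∈ centralizer a)
    (hci : ¬ InSpanUpTo (K := K) a b i c) : χ (b i) ≤ χ c := by
  rcases Nat.eq_zero_or_pos i with rfl | hi
  · have hc0 : c ≠ 0 := by rwa [inSpanUpTo_zero_iff] at hci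
    have h1 : (1 : S) ≠ 0 := fun h1 => hc0 (by rw [← one_mul c, h1, zero_mul])
    rw [hb.zero, hχ.map_one h1]
    exact hnonneg c hc hc0
  · exact hb.degree_le i hi c hc hci

theorem degree_mono (hb : IsMinimalSequence K χ a b) (hχ : IsPseudoDegree χ) (h1 : (1 : S) ≠ 0)
    (hnonneg : ∀ c ∈ centralizer a, c ≠ 0 → 0 ≤ χ c) : Monotone fun i => χ (b i) :=
  fun i j hij => hb.degree_le_of_not_inSpanUpTo hχ hnonneg i (hb.mem_centralizer j) fun hj =>
    hb.not_inSpanUpTo_self h1 j (spanUpTo_mono hij hj)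

theorem degree_le_of_sub_smul_mem_spanUpTo (hb : IsMinimalSequence K χ a b)
    (hχ : IsPseudoDegree χ) (h1 : (1 : S) ≠ 0) (hnonneg : ∀ c ∈ centralizer a, c ≠ 0 → 0 ≤ χ c)
    (i : ℕ) {w : S} (hw : w ∈ centralizer a) {c : K} (hc : c ≠ 0)
    (hwc : w - c • b i ∈ spanUpTo K a b i) : χ (b i) ≤ χ w := by
  refine hb.degree_le_of_not_inSpanUpTo hχ hnonneg i hw fun hwi =>
    hb.not_inSpanUpTo_self h1 i ?_
  have hcb : c • b i ∈ spanUpTo K a b i := by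
    simpa only [sub_sub_cancel] using Submodule.sub_mem _ hwi hwc
  exact (Submodule.smul_mem_iff _ hc).1 hcb

variable [SMulCommClass K S S]

theorem degree_le_of_top_coeff_ne_zero (hb : IsMinimalSequence K χ a b) (hχ : IsPseudoDegree χ)
    (h1 : (1 : S) ≠ 0) (ha : a ∈ nucleus S) (hnonneg : ∀ c ∈ centralizer a, c ≠ 0 → 0 ≤ χ c)
    {T : Finset ℕ} {i : ℕ} (hi : i ∈ T) (hT : ∀ j ∈ T, j ≤ i) (e : ℕ → ℕ) (he : e i = 0)
    (c : ℕ → K) (hc : c i ≠ 0) :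
    χ (b i) ≤ χ (∑ j ∈ T, c j • (apow a (e j) * b j)) := by
  classical
  refine hb.degree_le_of_sub_smul_mem_spanUpTo hχ h1 hnonneg i
    (Submodule.sum_mem (centralizerSubmodule a) fun j _ =>
      Submodule.smul_mem _ _ (apow_mul_mem_centralizer ha (hb.mem_centralizer j) _)) hc ?_
  have hei : c i • (apow a (e i) * b i) = c i • b i := by
    rw [he]
    exact congrArg _ (one_mul _)
  rw [← Finset.add_sum_erase T _ hi, hei, add_sub_cancel_left]
  exact Submodule.sum_mem _ fun j hj => Submodule.smul_mem _ _ (apow_mul_mem_spanUpTo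
    ((hT j (Finset.mem_of_mem_erase hj)).lt_of_ne (Finset.ne_of_mem_erase hj)) _)

theorem le_degree_sum_leadingTerms (hb : IsMinimalSequence K χ a b) (hχ : IsPseudoDegree χ)
    (h1 : (1 : S) ≠ 0) (ha : a ∈ nucleus S) {m : ℤ} (hm : χ a = m) (hm0 : 0 < m)
    (hnonneg : ∀ c ∈ centralizer a, c ≠ 0 → 0 ≤ χ c)
    {T : Finset ℕ} {i : ℕ} (hi : i ∈ T) (hT : ∀ j ∈ T, j ≤ i) (d : ℕ → ℕ) (c : ℕ → K)
    (hc : c i ≠ 0) {M : WithBot ℤ} (hM : ∀ j ∈ T, ((d j * m : ℤ) : WithBot ℤ) + χ (b j) = M) :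
    M ≤ χ (∑ j ∈ T, c j • (apow a (d j) * b j)) := by
  have hbi : χ (b i) ≠ ⊥ := hχ.ne_bot fun h =>
    hb.not_inSpanUpTo_self h1 i (h ▸ (spanUpTo K a b i).zero_mem)
  have hd : ∀ j ∈ T, d i ≤ d j := by
    intro j hj
    have hle : ((d i * m : ℤ) : WithBot ℤ) + χ (b i) ≤ ((d j * m : ℤ) : WithBot ℤ) + χ (b i) := by
      rw [hM i hi, ← hM j hj]
      exact add_le_add le_rfl (hb.degree_mono hχ h1 hnonneg (hT j hj))
    rw [WithBot.add_le_add_iff_right hbi, WithBot.coe_le_coe] at hle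
    exact_mod_cast le_of_mul_le_mul_right hle hm0
  have hsplit : apow a (d i) * ∑ j ∈ T, c j • (apow a (d j - d i) * b j) =
      ∑ j ∈ T, c j • (apow a (d j) * b j) := by
    rw [Finset.mul_sum]
    refine Finset.sum_congr rfl fun j hj => ?_
    rw [mul_smul_comm, apow_mul_apow_mul ha, Nat.add_sub_cancel' (hd j hj)]
  rw [← hsplit, hχ.map_mul, hχ.map_apow hm, ← hM i hi]
  exact add_le_add le_rfl (hb.degree_le_of_top_coeff_ne_zero hχ h1 ha hnonneg hi hT
    (fun j => d j - d i) (Nat.sub_self _) c hc)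

theorem sup_le_degree_sum (hb : IsMinimalSequence K χ a b) (hχ : IsPseudoDegree χ)
    (h1 : (1 : S) ≠ 0) (hK : ∀ c : K, c ≠ 0 → 0 ≤ χ (c • (1 : S))) (ha : a ∈ nucleus S)
    {m : ℤ} (hm : χ a = m) (hm0 : 0 < m) (hnonneg : ∀ c ∈ centralizer a, c ≠ 0 → 0 ≤ χ c)
    (k : ℕ) (φ : ℕ → Polynomial K) :
    (Finset.range k).sup (fun j => χ (evalAt a (φ j)) + χ (b j)) ≤
      χ (∑ j ∈ Finset.range k, evalAt a (φ j) * b j) := by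
  set F := fun j => χ (evalAt a (φ j)) + χ (b j)
  set total := ∑ j ∈ Finset.range k, evalAt a (φ j) * b j
  set M := (Finset.range k).sup F
  by_contra! hlt
  have hMbot : M ≠ ⊥ := ne_bot_of_gt hlt
  set T := (Finset.range k).filter fun j => F j = M
  have hFT : ∀ j ∈ T, F j = M := fun j hj => (Finset.mem_filter.1 hj).2
  have hTne : T.Nonempty := by
    obtain ⟨j, hj, hjM⟩ := Finset.exists_mem_eq_sup (Finset.range k)
      (Finset.nonempty_iff_ne_empty.2 fun h => hMbot (by simp only [M, h, Finset.sup_empty])) F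
    exact ⟨j, Finset.mem_filter.2 ⟨hj, hjM.symm⟩⟩
  have hφ : ∀ j ∈ T, φ j ≠ 0 := fun j hj h => hMbot <| by
    rw [← hFT j hj]
    simp only [F, h, evalAt_zero, hχ.map_zero, WithBot.bot_add]
  have hFdeg : ∀ j ∈ T, (((φ j).natDegree * m : ℤ) : WithBot ℤ) + χ (b j) = M :=
    fun j hj => by rw [← hχ.map_evalAt hK hm hm0 (hφ j hj)]; exact hFT j hj
  have hlead := hb.le_degree_sum_leadingTerms hχ h1 ha hm hm0 hnonneg (T.max'_mem hTne)
    (fun j hj => T.le_max' j hj) (fun j => (φ j).natDegree) (fun j => (φ j).leadingCoeff)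
    (Polynomial.leadingCoeff_ne_zero.2 (hφ _ (T.max'_mem hTne))) hFdeg
  have hlt' : χ (∑ j ∈ T, (φ j).leadingCoeff • (apow a (φ j).natDegree * b j)) < M := by
    rw [← sub_sub_cancel total (∑ j ∈ T, _)]
    exact (hχ.map_sub_le _ _).trans_lt (max_lt hlt (hχ.map_sum_sub_leadingTerms_lt hK hm hm0
      b φ _ (fun j hj => Finset.le_sup (f := F) hj) hMbot))
  exact hlead.not_gt hlt'

end IsMinimalSequence

end

theorem degree_of_span_combination_general {K S : Type*} [Field K] [NonAssocRing S]
    [Module K S] [SMulCommClass K S S] [IsScalarTower K S S]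
    (χ : S → WithBot ℤ) (hχ : IsPseudoDegree χ)
    (a : S) (ha : a ∈ nucleus S) (m : ℕ) (hm : χ a = (m : ℤ)) (hmpos : 0 < m)
    (ℓ : ℕ) (hD : CondD K χ (centralizer a) ℓ)
    (b : ℕ → S) (hb0 : b 0 = 1) (hbC : ∀ i, b i ∈ centralizer a)
    (hbout : ∀ i, 0 < i → ¬ InSpanUpTo (K := K) a b i (b i))
    (hbmin : ∀ i, 0 < i → ∀ c ∈ centralizer a,
      ¬ InSpanUpTo (K := K) a b i c → χ (b i) ≤ χ c)
    (k : ℕ) (φ : ℕ → Polynomial K) :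
    χ (∑ j ∈ Finset.range k, evalAt (a := a) (φ j) * b j) =
      (Finset.range k).sup fun j => χ (evalAt (a := a) (φ j)) + χ (b j) := by
  have h1 : (1 : S) ≠ 0 := fun h1 => WithBot.bot_ne_coe <| by
    rw [← hχ.map_zero, ← mul_zero a, ← h1, mul_one, hm]
  have hone : (1 : S) ∈ centralizer a := by
    change a * 1 = 1 * a
    rw [mul_one, one_mul]
  have hK : ∀ c : K, c ≠ 0 → 0 ≤ χ (c • (1 : S)) := fun c hc =>
    hD.1 _ ((centralizerSubmodule a).smul_mem c hone) (smul_ne_zero hc h1)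
  have hb : IsMinimalSequence K χ a b := ⟨hb0, hbC, hbout, hbmin⟩
  refine le_antisymm ?_ (hb.sup_le_degree_sum hχ h1 hK ha hm (by exact_mod_cast hmpos) hD.1 k φ)
  simpa only [hχ.map_mul] using hχ.map_sum_le (Finset.range k) fun j => evalAt a (φ j) * b j

/-- In the setting of the rank-bound theorem: let `b 0 = 1` and let each `b i`
(`i > 0`) be an element of `C_S(a)` of minimal `χ`-value outside the left
`K[a]`-span of the previous ones.  Then for any `φ₀, …, φ_{k-1} ∈ K[x]`,
`χ (Σ_j φ_j(a)·b_j) = max_j (χ (φ_j(a)) + χ (b_j))`. -/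
theorem degree_of_span_combination {K S : Type*} [Field K] [NonAssocRing S]
    [Module K S] [SMulCommClass K S S] [IsScalarTower K S S]
    (χ : S → WithBot ℤ) (hχ : IsPseudoDegree χ)
    (a : S) (ha : a ∈ nucleus S) (m : ℕ) (hm : χ a = (m : ℤ)) (hmpos : 0 < m)
    (ℓ : ℕ) (hℓ : 0 < ℓ) (hD : CondD K χ (centralizer a) ℓ)
    (b : ℕ → S) (hb0 : b 0 = 1) (hbC : ∀ i, b i ∈ centralizer a)
    (hbout : ∀ i, 0 < i → ¬ InSpanUpTo (K := K) a b i (b i))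
    (hbmin : ∀ i, 0 < i → ∀ c ∈ centralizer a,
      ¬ InSpanUpTo (K := K) a b i c → χ (b i) ≤ χ c)
    (k : ℕ) (φ : ℕ → Polynomial K) :
    χ (∑ j ∈ Finset.range k, evalAt (a := a) (φ j) * b j) =
      (Finset.range k).sup fun j => χ (evalAt (a := a) (φ j)) + χ (b j) :=
  degree_of_span_combination_general χ hχ a ha m hm hmpos ℓ hD b hb0 hbC hbout hbmin k φ
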